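/- Let σ be a Möbius transformation of ℂ̂ with lower-left matrix entry c(σ) ≠ 0 (in an SL(2,ℂ) representative), let φ be smooth on a domain Ω with σ(Ω) ⊂ Ω and φ(σw) = φ(w) − log|σ'(w)|², and define the 1-form θ_{σ^{-1}}(φ) = (φ − (1/2)log|σ'|² − log|c(σ)|²)·((σ''/σ')dw − (σ̄''/σ̄')dw̄) and the 2-form ω(φ) = (|φ_w|² + e^{φ}) dw∧dw̄. Then σ*(ω(φ)) = ω(φ) + d θ_{σ^{-1}}(φ) on Ω. -/

import Mathlib

open Complex

/-- Wirtinger derivative ∂f/∂w = (∂f/∂x − i ∂f/∂y)/2 of f : ℂ → ℂ. -/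
noncomputable def wderiv (f : ℂ → ℂ) (z : ℂ) : ℂ :=
  (fderiv ℝ f z 1 - Complex.I * fderiv ℝ f z Complex.I) / 2

/-- Wirtinger derivative ∂f/∂w̄ = (∂f/∂x + i ∂f/∂y)/2 of f : ℂ → ℂ. -/
noncomputable def wderivBar (f : ℂ → ℂ) (z : ℂ) : ℂ :=
  (fderiv ℝ f z 1 + Complex.I * fderiv ℝ f z Complex.I) / 2

lemma wderiv_congr {f g : ℂ → ℂ} {w : ℂ} (h : f =ᶠ[nhds w] g) :
    wderiv f w = wderiv g w := by
  unfold wderiv; rw [h.fderiv_eq]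

lemma wderivBar_congr {f g : ℂ → ℂ} {w : ℂ} (h : f =ᶠ[nhds w] g) :
    wderivBar f w = wderivBar g w := by
  unfold wderivBar; rw [h.fderiv_eq]

lemma fderiv_of_hasDerivAt {f : ℂ → ℂ} {f' w : ℂ} (h : HasDerivAt f f' w) (v : ℂ) :
    fderiv ℝ f w v = v * f' := by
  have h2 := (h.hasFDerivAt.restrictScalars ℝ).fderiv
  rw [h2]
  simp [smul_eq_mul]

lemma wderiv_holo {f : ℂ → ℂ} {f' w : ℂ} (h : HasDerivAt f f' w) :
    wderiv f w = f' := by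
  unfold wderiv
  rw [fderiv_of_hasDerivAt h, fderiv_of_hasDerivAt h]
  have : Complex.I * Complex.I = -1 := Complex.I_mul_I
  field_simp
  ring_nf
  try rw [Complex.I_sq]
  try ring

lemma wderivBar_holo {f : ℂ → ℂ} {f' w : ℂ} (h : HasDerivAt f f' w) :
    wderivBar f w = 0 := by
  unfold wderivBar
  rw [fderiv_of_hasDerivAt h, fderiv_of_hasDerivAt h]
  ring_nf
  try rw [Complex.I_sq]
  try ring

lemma fderiv_conj_comp {f : ℂ → ℂ} {w : ℂ} (hf : DifferentiableAt ℝ f w) (v : ℂ) :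
    fderiv ℝ (fun z => (starRingEnd ℂ) (f z)) w v = (starRingEnd ℂ) (fderiv ℝ f w v) := by
  have h : HasFDerivAt (fun z => (starRingEnd ℂ) (f z))
      ((Complex.conjCLE.toContinuousLinearMap).comp (fderiv ℝ f w)) w :=
    (Complex.conjCLE.toContinuousLinearMap.hasFDerivAt).comp w hf.hasFDerivAt
  rw [h.fderiv]
  rfl

lemma wderiv_conj {f : ℂ → ℂ} {w : ℂ} (hf : DifferentiableAt ℝ f w) :
    wderiv (fun z => (starRingEnd ℂ) (f z)) w = (starRingEnd ℂ) (wderivBar f w) := by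
  unfold wderiv wderivBar
  rw [fderiv_conj_comp hf, fderiv_conj_comp hf]
  simp [map_add, map_div₀, map_mul, map_sub]
  rw [show ((starRingEnd ℂ) 2) = 2 from by exact map_ofNat (starRingEnd ℂ) 2]
  try ring

lemma wderivBar_conj {f : ℂ → ℂ} {w : ℂ} (hf : DifferentiableAt ℝ f w) :
    wderivBar (fun z => (starRingEnd ℂ) (f z)) w = (starRingEnd ℂ) (wderiv f w) := by
  unfold wderiv wderivBar
  rw [fderiv_conj_comp hf, fderiv_conj_comp hf]
  simp [map_add, map_div₀, map_mul, map_sub]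
  rw [show ((starRingEnd ℂ) 2) = 2 from by exact map_ofNat (starRingEnd ℂ) 2]
  try ring

lemma wderiv_add {f g : ℂ → ℂ} {w : ℂ} (hf : DifferentiableAt ℝ f w)
    (hg : DifferentiableAt ℝ g w) :
    wderiv (fun z => f z + g z) w = wderiv f w + wderiv g w := by
  unfold wderiv
  rw [fderiv_fun_add hf hg]
  simp
  ring

lemma wderiv_neg {f : ℂ → ℂ} {w : ℂ} :
    wderiv (fun z => -(f z)) w = -(wderiv f w) := by
  unfold wderiv
  rw [fderiv_fun_neg]
  simp
  ring

lemma wderiv_const (w k : ℂ) : wderiv (fun _ => k) w = 0 := by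
  unfold wderiv
  simp

lemma wderiv_sub {f g : ℂ → ℂ} {w : ℂ} (hf : DifferentiableAt ℝ f w)
    (hg : DifferentiableAt ℝ g w) :
    wderiv (fun z => f z - g z) w = wderiv f w - wderiv g w := by
  unfold wderiv
  rw [fderiv_fun_sub hf hg]
  simp
  ring

lemma wderiv_mul {f g : ℂ → ℂ} {w : ℂ} (hf : DifferentiableAt ℝ f w)
    (hg : DifferentiableAt ℝ g w) :
    wderiv (fun z => f z * g z) w = wderiv f w * g w + f w * wderiv g w := by
  unfold wderiv
  rw [fderiv_fun_mul hf hg]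
  simp [smul_eq_mul]
  ring

lemma wderivBar_mul {f g : ℂ → ℂ} {w : ℂ} (hf : DifferentiableAt ℝ f w)
    (hg : DifferentiableAt ℝ g w) :
    wderivBar (fun z => f z * g z) w = wderivBar f w * g w + f w * wderivBar g w := by
  unfold wderivBar
  rw [fderiv_fun_mul hf hg]
  simp [smul_eq_mul]
  ring

lemma wderiv_comp_holo {f σ : ℂ → ℂ} {s w : ℂ} (hf : DifferentiableAt ℝ f (σ w))
    (hσ : HasDerivAt σ s w) :
    wderiv (fun z => f (σ z)) w = wderiv f (σ w) * s := by
  obtain ⟨r, t, rfl⟩ : ∃ r t : ℝ, s = (r:ℂ) + t * Complex.I :=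
    ⟨s.re, s.im, (Complex.re_add_im s).symm⟩
  have hcomp : HasFDerivAt (fun z => f (σ z))
      ((fderiv ℝ f (σ w)).comp ((ContinuousLinearMap.smulRight (1 : ℂ →L[ℂ] ℂ)
        ((r:ℂ) + t * Complex.I)).restrictScalars ℝ)) w :=
    hf.hasFDerivAt.comp w (hσ.hasFDerivAt.restrictScalars ℝ)
  unfold wderiv
  rw [hcomp.fderiv]
  set L := fderiv ℝ f (σ w) with hLdef
  have hL : ∀ v : ℂ, L v = v.re • L 1 + v.im • L Complex.I := by
    intro v
    have hv : v = v.re • (1:ℂ) + v.im • Complex.I := by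
      rw [Complex.real_smul, Complex.real_smul, mul_one]
      exact (Complex.re_add_im v).symm
    conv_lhs => rw [hv]
    rw [map_add, map_smul, map_smul]
  simp only [ContinuousLinearMap.coe_comp', Function.comp_apply,
    ContinuousLinearMap.coe_restrictScalars', ContinuousLinearMap.smulRight_apply,
    ContinuousLinearMap.one_apply, smul_eq_mul]
  rw [hL (1 * ((r:ℂ) + t * Complex.I)), hL (Complex.I * ((r:ℂ) + t * Complex.I))]
  simp only [one_mul, Complex.add_re, Complex.add_im, Complex.mul_re, Complex.mul_im,
    Complex.I_re, Complex.I_im, Complex.ofReal_re, Complex.ofReal_im, Complex.real_smul]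
  push_cast
  ring_nf
  try rw [Complex.I_sq]
  try ring

lemma wderivBar_real {r : ℂ → ℝ} {w : ℂ}
    (h : DifferentiableAt ℝ (fun z => ((r z : ℝ) : ℂ)) w) :
    wderivBar (fun z => ((r z : ℝ) : ℂ)) w
      = (starRingEnd ℂ) (wderiv (fun z => ((r z : ℝ) : ℂ)) w) := by
  have h2 := wderivBar_conj h
  have hfun : (fun z => (starRingEnd ℂ) ((r z : ℝ) : ℂ)) = fun z => ((r z : ℝ) : ℂ) :=
    funext fun z => Complex.conj_ofReal _
  rw [hfun] at h2
  exact h2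

lemma log_normSq_affine_facts {c d w : ℂ} (hden : c * w + d ≠ 0) :
    DifferentiableAt ℝ (fun z => ((Real.log (Complex.normSq (c * z + d)) : ℝ) : ℂ)) w ∧
    wderiv (fun z => ((Real.log (Complex.normSq (c * z + d)) : ℝ) : ℂ)) w
      = c / (c * w + d) := by
  set m := c * w + d with hm
  set e := (starRingEnd ℂ) m with he
  have hm0 : Complex.normSq m ≠ 0 := (Complex.normSq_pos.mpr hden).ne'
  have hmpos : 0 < Complex.normSq m := Complex.normSq_pos.2 hden
  -- h z = e * (c*z+d)
  set h : ℂ → ℂ := fun z => e * (c * z + d) with hh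
  have hhw : h w = ((Complex.normSq m : ℝ) : ℂ) := by
    simp only [hh, ← hm, he]
    rw [mul_comm]
    exact Complex.mul_conj m
  have hslit : h w ∈ Complex.slitPlane := by
    rw [hhw]
    exact Complex.mem_slitPlane_iff.2 (Or.inl (by simpa using hmpos))
  have hde : HasDerivAt h (e * c) w := by
    have h1 : HasDerivAt (fun z : ℂ => c * z + d) c w := by
      simpa using ((hasDerivAt_id w).const_mul c).add_const d
    exact HasDerivAt.const_mul e h1
  have hlog : HasDerivAt (fun z => Complex.log (h z)) (e * c / h w) w := hde.clog hslit
  have hdiff : DifferentiableAt ℝ (fun z => Complex.log (h z)) w :=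
    hlog.differentiableAt.restrictScalars ℝ
  have hdiffc : DifferentiableAt ℝ (fun z => (starRingEnd ℂ) (Complex.log (h z))) w :=
    (Complex.conjCLE.differentiable.differentiableAt).comp w hdiff
  -- eventual equality
  have hopen : IsOpen {z : ℂ | c * z + d ≠ 0} :=
    isOpen_compl_singleton.preimage (by continuity)
  have hev : (fun z => ((Real.log (Complex.normSq (c * z + d)) : ℝ) : ℂ))
      =ᶠ[nhds w] fun z => Complex.log (h z) + (starRingEnd ℂ) (Complex.log (h z))
        - ((Real.log (Complex.normSq m) : ℝ) : ℂ) := by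
    filter_upwards [hopen.mem_nhds hden] with z hz
    have hz0 : (c * z + d) ≠ 0 := hz
    have hhz : h z ≠ 0 := mul_ne_zero (by simpa [he] using hden) hz0
    have key : Complex.log (h z) + (starRingEnd ℂ) (Complex.log (h z))
        = ((2 * Real.log (‖h z‖) : ℝ) : ℂ) := by
      rw [Complex.add_conj, Complex.log_re]
    rw [key]
    have habs : 2 * Real.log (‖h z‖) = Real.log (Complex.normSq (h z)) := by
      rw [← Complex.sq_norm, Real.log_pow]
      push_cast; ring
    have hnormmul : Complex.normSq (h z) = Complex.normSq m * Complex.normSq (c * z + d) := by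
      simp [hh, he, map_mul]
    rw [habs, hnormmul, Real.log_mul hm0 ((Complex.normSq_pos.mpr hz0).ne')]
    push_cast
    ring
  constructor
  · exact hev.differentiableAt_iff.mpr ((hdiff.add hdiffc).sub (differentiableAt_const _))
  rw [wderiv_congr hev]
  rw [wderiv_sub (f := fun z => Complex.log (h z) + (starRingEnd ℂ) (Complex.log (h z))) (hdiff.add hdiffc) (differentiableAt_const _),
    wderiv_add hdiff hdiffc, wderiv_const, wderiv_holo hlog,
    wderiv_conj hdiff, wderivBar_holo hlog]
  rw [hhw]
  have he0 : e ≠ 0 := by simpa [he] using hden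
  rw [show ((Complex.normSq m : ℝ) : ℂ) = e * m from by rw [he, mul_comm]; exact (Complex.mul_conj m).symm]
  simp only [map_zero]
  field_simp
  ring

/-- Transformation identity σ*(ω(φ)) = ω(φ) + dθ_{σ⁻¹}(φ) for the Liouville
action density, stated in components with respect to dw∧dw̄: for a Möbius
transformation σ = (aw+b)/(cw+d) with c ≠ 0 and φ(σw) = φ(w) − log|σ'(w)|²,
the pullback coefficient (|φ_w|² + e^φ)∘σ · |σ'|² equals
(|φ_w|² + e^φ) + (∂_w β − ∂_w̄ α), where θ = α dw + β dw̄ with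
α = u·(σ''/σ'), β = −u·conj(σ''/σ'), u = φ − ½log|σ'|² − log|c(σ)|². -/
theorem liouville_density_transformation (Ω : Set ℂ) (hΩ : IsOpen Ω)
    (φ : ℂ → ℝ) (hφ : ContDiffOn ℝ (⊤ : ℕ∞) φ Ω) (a b c d : ℂ)
    (hdet : a * d - b * c = 1) (hc : c ≠ 0)
    (hden : ∀ w ∈ Ω, c * w + d ≠ 0)
    (hmaps : ∀ w ∈ Ω, (a * w + b) / (c * w + d) ∈ Ω)
    (htrans : ∀ w ∈ Ω,
      φ ((a * w + b) / (c * w + d)) = φ w -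
        Real.log (‖deriv (fun z => (a * z + b) / (c * z + d)) w‖ ^ 2)) :
    ∀ w ∈ Ω,
      let σ : ℂ → ℂ := fun z => (a * z + b) / (c * z + d)
      let Φ : ℂ → ℂ := fun z => ((φ z : ℝ) : ℂ)
      let A : ℂ → ℂ := fun z => deriv (deriv σ) z / deriv σ z
      let u : ℂ → ℂ := fun z =>
        ((φ z - (1 / 2) * Real.log (‖deriv σ z‖ ^ 2) -
            Real.log (‖c‖ ^ 2) : ℝ) : ℂ)
      ((‖wderiv Φ (σ w)‖ ^ 2 + Real.exp (φ (σ w)) : ℝ) : ℂ) *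
          ((‖deriv σ w‖ ^ 2 : ℝ) : ℂ) =
        ((‖wderiv Φ w‖ ^ 2 + Real.exp (φ w) : ℝ) : ℂ) +
          (wderiv (fun z => -(u z * (starRingEnd ℂ) (A z))) w -
            wderivBar (fun z => u z * A z) w) := by
  intro w hw
  set σf : ℂ → ℂ := fun z => (a * z + b) / (c * z + d) with hσf
  set Φf : ℂ → ℂ := fun z => ((φ z : ℝ) : ℂ) with hΦf
  intro σ Φ A u
  have hm : c * w + d ≠ 0 := hden w hw
  -- affine derivative helpers
  have hgd : ∀ z : ℂ, HasDerivAt (fun y : ℂ => c * y + d) c z := by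
    intro z
    simpa using ((hasDerivAt_id z).const_mul c).add_const d
  -- derivative of σ
  have hσd : ∀ z ∈ Ω, HasDerivAt σf (((c * z + d) ^ 2)⁻¹) z := by
    intro z hz
    have h1 : HasDerivAt (fun y : ℂ => a * y + b) a z := by
      simpa using ((hasDerivAt_id z).const_mul a).add_const b
    have h3 := h1.div (hgd z) (hden z hz)
    rw [show a * (c * z + d) - (a * z + b) * c = 1 from by linear_combination hdet, one_div] at h3
    exact h3
  have hderσ : ∀ z ∈ Ω, deriv σf z = ((c * z + d) ^ 2)⁻¹ := fun z hz => (hσd z hz).deriv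
  have hd2 : ∀ z ∈ Ω, deriv (deriv σf) z = -(2 * c) / (c * z + d) ^ 3 := by
    intro z hz
    have hev : deriv σf =ᶠ[nhds z] fun ζ => ((c * ζ + d) ^ 2)⁻¹ := by
      filter_upwards [hΩ.mem_nhds hz] with ζ hζ
      exact hderσ ζ hζ
    rw [hev.deriv_eq]
    have h3 : HasDerivAt (fun ζ : ℂ => (c * ζ + d) ^ 2) (2 * (c * z + d) * c) z := by
      exact (by simpa using (hgd z).pow 2 : HasDerivAt ((fun y : ℂ => c * y + d) ^ 2) (2 * (c * z + d) * c) z)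
    have h4 := h3.inv (pow_ne_zero 2 (hden z hz))
    rw [(show HasDerivAt (fun ζ : ℂ => ((c * ζ + d) ^ 2)⁻¹) _ z from h4).deriv]
    have hgz := hden z hz
    field_simp
  have hA : ∀ z ∈ Ω, A z = -(2 * c) / (c * z + d) := by
    intro z hz
    show deriv (deriv σf) z / deriv σf z = _
    rw [hd2 z hz, hderσ z hz]
    have hgz := hden z hz
    field_simp
  have habs2 : ∀ z ∈ Ω, ‖deriv σf z‖ ^ 2 = ((Complex.normSq (c * z + d)) ^ 2)⁻¹ := by
    intro z hz
    rw [hderσ z hz, Complex.sq_norm, map_inv₀, map_pow]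
  have hu : ∀ z ∈ Ω, u z =
      ((φ z + Real.log (Complex.normSq (c * z + d)) - Real.log (Complex.normSq c) : ℝ) : ℂ) := by
    intro z hz
    show ((φ z - (1 / 2) * Real.log (‖deriv σf z‖ ^ 2)
        - Real.log (‖c‖ ^ 2) : ℝ) : ℂ) = _
    rw [habs2 z hz, Complex.sq_norm]
    norm_cast
    rw [Real.log_inv, Real.log_pow]
    push_cast
    ring
  have hφσ : ∀ z ∈ Ω, φ (σf z) = φ z + 2 * Real.log (Complex.normSq (c * z + d)) := by
    intro z hz
    rw [htrans z hz]
    show φ z - Real.log (‖deriv σf z‖ ^ 2) = _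
    rw [habs2 z hz, Real.log_inv, Real.log_pow]
    push_cast
    ring
  -- differentiability of Φ
  have hΦdiff : ∀ z ∈ Ω, DifferentiableAt ℝ Φf z := by
    intro z hz
    have hφz : DifferentiableAt ℝ φ z :=
      (hφ.differentiableOn (by simp)).differentiableAt (hΩ.mem_nhds hz)
    exact Complex.ofRealCLM.differentiableAt.comp z hφz
  -- log facts at w
  obtain ⟨hLNdiff, hLNw⟩ := log_normSq_affine_facts hm
  -- the function U
  have hUsplit : (fun z => ((φ z + Real.log (Complex.normSq (c * z + d)) -
        Real.log (Complex.normSq c) : ℝ) : ℂ))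
      = fun z => Φf z + ((Real.log (Complex.normSq (c * z + d)) : ℝ) : ℂ)
          - ((Real.log (Complex.normSq c) : ℝ) : ℂ) := by
    funext z
    push_cast
    ring
  have hUdiff : DifferentiableAt ℝ (fun z => ((φ z + Real.log (Complex.normSq (c * z + d)) -
      Real.log (Complex.normSq c) : ℝ) : ℂ)) w := by
    rw [hUsplit]
    exact ((hΦdiff w hw).add hLNdiff).sub (differentiableAt_const _)
  have hUw : wderiv (fun z => ((φ z + Real.log (Complex.normSq (c * z + d)) -
      Real.log (Complex.normSq c) : ℝ) : ℂ)) w = wderiv Φf w + c / (c * w + d) := by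
    rw [hUsplit]
    rw [wderiv_sub (f := fun z => Φf z + ((Real.log (Complex.normSq (c * z + d)) : ℝ) : ℂ)) ((hΦdiff w hw).add hLNdiff) (differentiableAt_const _),
      wderiv_add (hΦdiff w hw) hLNdiff, wderiv_const, hLNw]
    ring
  have hUbar : wderivBar (fun z => ((φ z + Real.log (Complex.normSq (c * z + d)) -
      Real.log (Complex.normSq c) : ℝ) : ℂ)) w
      = (starRingEnd ℂ) (wderiv Φf w + c / (c * w + d)) := by
    rw [← hUw]
    exact wderivBar_real hUdiff
  -- the function G = -2c/(cz+d)
  have hG : HasDerivAt (fun z : ℂ => -(2 * c) / (c * z + d)) (-(2 * c) * (-c / (c * w + d) ^ 2)) w := by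
    have h4 := ((hgd w).inv hm).const_mul (-(2 * c))
    have hfe : (fun z : ℂ => -(2 * c) * (c * z + d)⁻¹) = fun z : ℂ => -(2 * c) / (c * z + d) :=
      funext fun z => (div_eq_mul_inv _ _).symm
    rw [← hfe]
    exact h4
  have hGdiff : DifferentiableAt ℝ (fun z : ℂ => -(2 * c) / (c * z + d)) w :=
    hG.differentiableAt.restrictScalars ℝ
  have hGcdiff : DifferentiableAt ℝ (fun z : ℂ => (starRingEnd ℂ) (-(2 * c) / (c * z + d))) w :=
    (Complex.conjCLE.differentiable.differentiableAt).comp w hGdiff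
  have hGbar : wderivBar (fun z : ℂ => -(2 * c) / (c * z + d)) w = 0 := wderivBar_holo hG
  -- X term
  have hX : wderiv (fun z => -(u z * (starRingEnd ℂ) (A z))) w
      = -((wderiv Φf w + c / (c * w + d)) * (starRingEnd ℂ) (-(2 * c) / (c * w + d))) := by
    have hev : (fun z => -(u z * (starRingEnd ℂ) (A z))) =ᶠ[nhds w]
        fun z => -(((φ z + Real.log (Complex.normSq (c * z + d)) -
            Real.log (Complex.normSq c) : ℝ) : ℂ)
          * (starRingEnd ℂ) (-(2 * c) / (c * z + d))) := by
      filter_upwards [hΩ.mem_nhds hw] with z hz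
      rw [hu z hz, hA z hz]
    rw [wderiv_congr hev, wderiv_neg, wderiv_mul hUdiff hGcdiff,
      wderiv_conj hGdiff, hGbar, map_zero, mul_zero, add_zero, hUw]
  -- Y term
  have hY : wderivBar (fun z => u z * A z) w
      = (starRingEnd ℂ) (wderiv Φf w + c / (c * w + d)) * (-(2 * c) / (c * w + d)) := by
    have hev : (fun z => u z * A z) =ᶠ[nhds w]
        fun z => ((φ z + Real.log (Complex.normSq (c * z + d)) -
            Real.log (Complex.normSq c) : ℝ) : ℂ) * (-(2 * c) / (c * z + d)) := by
      filter_upwards [hΩ.mem_nhds hw] with z hz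
      rw [hu z hz, hA z hz]
    rw [wderivBar_congr hev, wderivBar_mul hUdiff hGdiff, hGbar, mul_zero, add_zero, hUbar]
  -- chain rule for Φ ∘ σ
  have hq : wderiv Φf (σf w) * ((c * w + d) ^ 2)⁻¹
      = wderiv Φf w + 2 * (c / (c * w + d)) := by
    rw [← wderiv_comp_holo (hΦdiff (σf w) (hmaps w hw)) (hσd w hw)]
    have hev : (fun z => Φf (σf z)) =ᶠ[nhds w]
        fun z => Φf z + (2 : ℂ) * ((Real.log (Complex.normSq (c * z + d)) : ℝ) : ℂ) := by
      filter_upwards [hΩ.mem_nhds hw] with z hz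
      show ((φ (σf z) : ℝ) : ℂ) = _
      rw [hφσ z hz]
      push_cast
      ring
    rw [wderiv_congr hev,
      wderiv_add (g := fun z => (2 : ℂ) * ((Real.log (Complex.normSq (c * z + d)) : ℝ) : ℂ)) (hΦdiff w hw) ((differentiableAt_const _).mul hLNdiff),
      wderiv_mul (differentiableAt_const _) hLNdiff, wderiv_const, hLNw]
    ring
  have hqe : wderiv Φf (σf w) = (wderiv Φf w + 2 * (c / (c * w + d))) * (c * w + d) ^ 2 := by
    rw [← hq]
    field_simp
  -- exp identity
  have hNpos : 0 < Complex.normSq (c * w + d) := Complex.normSq_pos.mpr hm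
  have hexp : ((Real.exp (φ (σf w)) : ℝ) : ℂ)
      = ((Real.exp (φ w) : ℝ) : ℂ) * ((c * w + d) * (starRingEnd ℂ) (c * w + d)) ^ 2 := by
    rw [hφσ w hw, Real.exp_add]
    rw [show (2 : ℝ) * Real.log (Complex.normSq (c * w + d))
        = Real.log ((Complex.normSq (c * w + d)) ^ 2) from by
      rw [Real.log_pow]; push_cast; ring]
    rw [Real.exp_log (pow_pos hNpos 2)]
    push_cast
    rw [Complex.mul_conj]
    try push_cast
    try ring
  -- abs square cast
  have habsq : ∀ z : ℂ, ((‖z‖ ^ 2 : ℝ) : ℂ) = z * (starRingEnd ℂ) z := by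
    intro z
    rw [Complex.sq_norm]
    exact (Complex.mul_conj z).symm
  have hmc : (starRingEnd ℂ) c * (starRingEnd ℂ) w + (starRingEnd ℂ) d ≠ 0 := by
    intro h0
    apply hm
    have := congrArg (starRingEnd ℂ) h0
    simpa [map_add, map_mul] using this
  -- final assembly
  show ((‖wderiv Φf (σf w)‖ ^ 2 + Real.exp (φ (σf w)) : ℝ) : ℂ) *
          ((‖deriv σf w‖ ^ 2 : ℝ) : ℂ) =
        ((‖wderiv Φf w‖ ^ 2 + Real.exp (φ w) : ℝ) : ℂ) +
          (wderiv (fun z => -(u z * (starRingEnd ℂ) (A z))) w -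
            wderivBar (fun z => u z * A z) w)
  rw [hX, hY, hderσ w hw, Complex.ofReal_add, Complex.ofReal_add]
  simp only [habsq]
  rw [hexp, hqe]
  simp only [map_mul, map_add, map_pow, map_div₀, map_neg, map_ofNat, map_inv₀]
  field_simp
  ring
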